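/- Let a ∈ ℝ^{4,2} with ⟨a,p⟩ = 0 and ⟨a,a⟩ > 0 (an elliptic linear sphere complex preserving the point sphere complex). Then for every lightlike u ∈ ℝ^{4,2}: ⟨u,a⟩ = 0 if and only if ⟨u, s + ⟨s,p⟩p⟩ = 0 for every lightlike s ∈ span{a,p}. (Claim: the spheres of an elliptic linear sphere complex with ⟨a,p⟩ = 0 are exactly the spheres that intersect the spheres s_a^± ∈ span{a,p} orthogonally.) -/
import Mathlib


noncomputable section

/-- The vector space ℝ^{4,2}, modeled as `Fin 6 → ℝ`. -/
abbrev R42 : Type := Fin 6 → ℝ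

/-- The symmetric bilinear form of signature (4,2) on ℝ^{4,2}. -/
def bform : R42 →ₗ[ℝ] R42 →ₗ[ℝ] ℝ :=
  LinearMap.mk₂ ℝ
    (fun x y => x 0 * y 0 + x 1 * y 1 + x 2 * y 2 + x 3 * y 3 - x 4 * y 4 - x 5 * y 5)
    (fun x x' y => by simp only [Pi.add_apply]; ring)
    (fun c x y => by simp only [Pi.smul_apply, smul_eq_mul]; ring)
    (fun x y y' => by simp only [Pi.add_apply]; ring)
    (fun c x y => by simp only [Pi.smul_apply, smul_eq_mul]; ring)

/-- A lightlike vector: nonzero and isotropic. Represents an oriented 2-sphere. -/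
def IsLightlike (v : R42) : Prop := v ≠ 0 ∧ bform v v = 0

/-- The Lie inversion with respect to the linear sphere complex determined by `a`. -/
def lieInv (a r : R42) : R42 := r - (2 * bform r a / bform a a) • a

lemma bform_comm (x y : R42) : bform x y = bform y x := by
  simp only [bform, LinearMap.mk₂_apply]; ring

/-- The spheres of an elliptic linear sphere complex `a` with
`⟨a,p⟩ = 0` are exactly the spheres intersecting the spheres `s_a^± ∈ span {a,p}`
orthogonally: for lightlike `u`, `⟨u,a⟩ = 0` iff `⟨u, s + ⟨s,p⟩p⟩ = 0` for every
lightlike `s ∈ span {a,p}`. -/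
theorem stmt_15 (p a : R42)
    (hp : bform p p = -1)
    (hap : bform a p = 0) (haa : 0 < bform a a) :
    ∀ u : R42, IsLightlike u →
      (bform u a = 0 ↔
        ∀ s : R42, IsLightlike s → s ∈ Submodule.span ℝ ({a, p} : Set R42) →
          bform u (s + bform s p • p) = 0) := by
  intro u _hu
  constructor
  · intro hua s _hs hsmem
    obtain ⟨α, β, rfl⟩ := Submodule.mem_span_pair.mp hsmem
    simp only [map_add, map_smul, LinearMap.add_apply, LinearMap.smul_apply,
      smul_eq_mul, hap, hp, hua]
    ring
  · intro h
    set c := Real.sqrt (bform a a) with hc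
    have hc2 : c * c = bform a a := Real.mul_self_sqrt haa.le
    have hcpos : 0 < c := Real.sqrt_pos.mpr haa
    have hsne : a + c • p ≠ 0 := by
      intro h0
      have ha : a = -(c • p) := by linear_combination (norm := module) h0
      have : bform a a = -(c * c) := by
        rw [ha]; simp only [map_neg, map_smul, LinearMap.neg_apply, LinearMap.smul_apply,
          smul_eq_mul, hp]; ring
      nlinarith
    have hslight : IsLightlike (a + c • p) := by
      refine ⟨hsne, ?_⟩
      simp only [map_add, map_smul, LinearMap.add_apply, LinearMap.smul_apply,
        smul_eq_mul, hap, hp, bform_comm p a]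
      nlinarith [hc2]
    have hmem : a + c • p ∈ Submodule.span ℝ ({a, p} : Set R42) :=
      Submodule.mem_span_pair.mpr ⟨1, c, by simp⟩
    have := h _ hslight hmem
    have hsp : bform (a + c • p) p = -c := by
      simp only [map_add, map_smul, LinearMap.add_apply, LinearMap.smul_apply,
        smul_eq_mul, hap, hp]
      ring
    rw [hsp] at this
    have : bform u a = 0 := by
      have h2 : (a + c • p) + (-c) • p = a := by
        simp [add_assoc, ← add_smul]
      rw [h2] at this
      exact this
    exact this
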